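/- arXiv:2002.06689 — 2 statements merged into one kernel-verified Lean document; each statement's English description precedes it below -/
import Mathlib

section
/- Let E be an infinite-dimensional normed space over ℝ and let m and n be positive integers. Then the set NL(^m E; ℝ) is (n, 2^{dim E})-lineable in L(^m E; ℝ): whenever T_1, …, T_n ∈ NL(^m E; ℝ) are linearly independent with span(T_1,…,T_n) ⊆ NL(^m E; ℝ) ∪ {0}, there exists a subspace S of L(^m E; ℝ) with span(T_1,…,T_n) ⊆ S ⊆ NL(^m E; ℝ) ∪ {0} and dim S = 2^{dim E}. -/
/-!
A basis of `E` indexed by `ι × ℕ` turns each `f : ι → ℝ` into the linear functional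
`B (i, k) ↦ k ‖B (i, k)‖ f i`, which is unbounded unless `f = 0`; multiplying it by
`ψ(x₁) ⋯ ψ(x_{m-1})` for a coordinate functional `ψ` keeps it discontinuous. This embeds
`ι → ℝ`, of dimension `2 ^ dim E` by Erdős–Kaplansky, into `L(^m E; ℝ)` as a subspace `N`
meeting the continuous maps `D` only in `0`. The rest is linear algebra: `N ∩ (D + span T)`
embeds into `(D + span T) / D`, so it is finite-dimensional, and a complement of it in `N`,
plus `span T`, still has dimension `2 ^ dim E` and meets `D` only in `0`.
-/

open Cardinal

namespace Submodule

variable {K V : Type*} [DivisionRing K] [AddCommGroup V] [Module K V]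

theorem rank_le_of_disjoint_of_le_sup {P D U : Submodule K V} (hPD : Disjoint P D)
    (hP : P ≤ D ⊔ U) : Module.rank K P ≤ Module.rank K U := by
  have hinj : Function.Injective (D.mkQ ∘ₗ P.subtype) := by
    rw [← LinearMap.ker_eq_bot, LinearMap.ker_comp, ker_mkQ, eq_bot_iff]
    intro x hx
    exact Subtype.ext (disjoint_def.1 hPD x x.2 hx)
  calc Module.rank K P = Module.rank K (LinearMap.range (D.mkQ ∘ₗ P.subtype)) :=
        (rank_range_of_injective _ hinj).symm
    _ ≤ Module.rank K (U.map D.mkQ) := by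
        refine rank_mono ?_
        rw [LinearMap.range_comp, range_subtype]
        calc P.map D.mkQ ≤ (D ⊔ U).map D.mkQ := map_mono hP
          _ = U.map D.mkQ := by simp [map_sup]
    _ ≤ Module.rank K U := rank_map_le _ _

theorem exists_disjoint_sup_rank_eq {N D U : Submodule K V} [FiniteDimensional K U]
    (hND : Disjoint N D) (hN : ℵ₀ ≤ Module.rank K N) :
    ∃ W : Submodule K V, Disjoint W (D ⊔ U) ∧ Module.rank K W = Module.rank K N := by
  set P := comap N.subtype (D ⊔ U)
  obtain ⟨q, hq⟩ := P.exists_isCompl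
  refine ⟨q.map N.subtype, ?_, ?_⟩
  · rw [disjoint_def]
    rintro _ ⟨x, hxq, rfl⟩ hx
    simpa using disjoint_def.1 hq.disjoint x hx hxq
  · have hP : Module.rank K P < ℵ₀ := by
      rw [← rank_map_eq N.injective_subtype]
      refine (rank_le_of_disjoint_of_le_sup (D := D) ?_ ?_).trans_lt
        (Module.rank_lt_aleph0 K U)
      · exact hND.mono_left (map_subtype_le N P)
      · exact map_comap_le _ _
    have hsum := rank_sup_add_rank_inf_eq P q
    rw [hq.sup_eq_top, hq.inf_eq_bot, rank_top, rank_bot, add_zero] at hsum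
    have hq_inf : ℵ₀ ≤ Module.rank K q := by
      by_contra! h
      exact (add_lt_aleph0 hP h).not_ge (hsum ▸ hN)
    rw [rank_map_eq N.injective_subtype, hsum, add_eq_right hq_inf (hP.le.trans hq_inf)]

theorem exists_le_disjoint_rank_eq {N D U : Submodule K V} [FiniteDimensional K U]
    (hUD : Disjoint U D) (hND : Disjoint N D) (hN : ℵ₀ ≤ Module.rank K N) :
    ∃ S : Submodule K V, U ≤ S ∧ Disjoint S D ∧ Module.rank K S = Module.rank K N := by
  obtain ⟨W, hW, hWrank⟩ := exists_disjoint_sup_rank_eq (U := U) hND hN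
  refine ⟨W ⊔ U, le_sup_right, ?_, ?_⟩
  · rw [disjoint_def]
    intro x hx hxD
    obtain ⟨w, hw, u, hu, rfl⟩ := mem_sup.1 hx
    have hw0 : w = 0 := disjoint_def.1 hW w hw <| by simpa using sub_mem_sup hxD hu
    subst hw0
    rw [zero_add] at hxD ⊢
    exact disjoint_def.1 hUD u hu hxD
  · have hsum := rank_sup_add_rank_inf_eq W U
    rw [(hW.mono_right le_sup_right).eq_bot, rank_bot, add_zero, hWrank] at hsum
    rw [hsum, add_eq_left hN ((Module.rank_lt_aleph0 K U).le.trans hN)]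

end Submodule

namespace MultilinearMap

variable (R : Type*) {ι : Type*} (M : Type*) (N : Type*) [CommSemiring R]
  [AddCommMonoid M] [Module R M] [TopologicalSpace M]
  [AddCommMonoid N] [Module R N] [TopologicalSpace N] [ContinuousAdd N] [ContinuousConstSMul R N]

def continuousSubmodule : Submodule R (MultilinearMap R (fun _ : ι => M) N) where
  carrier := {f | Continuous f}
  add_mem' := Continuous.add
  zero_mem' := continuous_const
  smul_mem' c _ hf := hf.const_smul c

end MultilinearMap

namespace Module.Dual

variable {R M : Type*} [CommSemiring R] [AddCommMonoid M] [Module R M]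

def consProd (ψ : Module.Dual R M) (m : ℕ) :
    Module.Dual R M →ₗ[R] MultilinearMap R (fun _ : Fin (m + 1) => M) R where
  toFun φ := (MultilinearMap.mkPiAlgebra R (Fin (m + 1)) R).compLinearMap (Fin.cons φ fun _ => ψ)
  map_add' φ₁ φ₂ := by
    ext x
    simp [Fin.prod_univ_succ, add_mul]
  map_smul' c φ := by
    ext x
    simp [Fin.prod_univ_succ, mul_assoc]

theorem consProd_apply_cons (ψ φ : Module.Dual R M) (m : ℕ) (v b : M) :
    consProd ψ m φ (Fin.cons v fun _ => b) = φ v * ψ b ^ m := by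
  simp [consProd, Fin.prod_univ_succ]

theorem continuous_of_continuous_consProd [TopologicalSpace R] [TopologicalSpace M]
    {ψ φ : Module.Dual R M} {m : ℕ} {b : M} (hb : ψ b = 1)
    (h : Continuous (consProd ψ m φ)) : Continuous φ := by
  have : (fun v => consProd ψ m φ (Fin.cons v fun _ => b)) = φ := by
    funext v
    simp [consProd_apply_cons, hb]
  exact this ▸ h.comp (Continuous.finCons (A := fun _ => M) continuous_id continuous_const)

end Module.Dual

namespace Module.Basis

variable {E ι : Type*} [NormedAddCommGroup E] [NormedSpace ℝ E]
  (B : Module.Basis (ι × ℕ) ℝ E)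

noncomputable def unboundedDual : (ι → ℝ) →ₗ[ℝ] Module.Dual ℝ E :=
  (B.constr ℝ).toLinearMap ∘ₗ LinearMap.pi fun p => (p.2 * ‖B p‖) • LinearMap.proj p.1

theorem unboundedDual_apply_basis (f : ι → ℝ) (p : ι × ℕ) :
    B.unboundedDual f (B p) = p.2 * ‖B p‖ * f p.1 := by
  simp [unboundedDual]

theorem eq_zero_of_continuous_unboundedDual {f : ι → ℝ} (hf : Continuous (B.unboundedDual f)) :
    f = 0 := by
  let L : E →L[ℝ] ℝ := ⟨B.unboundedDual f, hf⟩
  funext i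
  have hbound (k : ℕ) : k * |f i| ≤ ‖L‖ := by
    have hpos : 0 < ‖B (i, k)‖ := norm_pos_iff.2 (B.ne_zero _)
    have hL : ‖L (B (i, k))‖ ≤ ‖L‖ * ‖B (i, k)‖ := L.le_opNorm (B (i, k))
    have hLB : ‖L (B (i, k))‖ = k * |f i| * ‖B (i, k)‖ := by
      change ‖B.unboundedDual f (B (i, k))‖ = _
      rw [unboundedDual_apply_basis, Real.norm_eq_abs, abs_mul, abs_mul, abs_norm,
        Nat.abs_cast]
      ring
    exact le_of_mul_le_mul_right (hLB ▸ hL) hpos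
  by_contra hfi
  obtain ⟨k, hk⟩ := exists_nat_gt (‖L‖ / |f i|)
  rw [div_lt_iff₀ (abs_pos.2 hfi)] at hk
  exact (hbound k).not_gt hk

end Module.Basis

theorem Cardinal.nonempty_equiv_prod_nat (ι : Type*) [Infinite ι] : Nonempty (ι ≃ ι × ℕ) :=
  Cardinal.eq.1 <| by simp

theorem rank_fun_real_of_infinite (ι : Type*) [Infinite ι] :
    Module.rank ℝ (ι → ℝ) = 2 ^ #ι := by
  rw [rank_fun_infinite, mk_arrow, mk_real, lift_continuum, lift_uzero, ← two_power_aleph0,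
    ← power_mul, aleph0_mul_eq (aleph0_le_mk ι)]

theorem exists_disjoint_continuousSubmodule_rank_eq (E : Type*) [NormedAddCommGroup E]
    [NormedSpace ℝ E] (hE : ¬FiniteDimensional ℝ E) (m : ℕ) :
    ∃ N : Submodule ℝ (MultilinearMap ℝ (fun _ : Fin (m + 1) => E) ℝ),
      Disjoint N (MultilinearMap.continuousSubmodule ℝ E ℝ) ∧
      Module.rank ℝ N = 2 ^ Module.rank ℝ E := by
  let B := Module.Basis.ofVectorSpace ℝ E
  have : Infinite (Module.Basis.ofVectorSpaceIndex ℝ E) :=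
    not_finite_iff_infinite.1 fun _ => hE (Module.Finite.of_basis B)
  obtain ⟨e⟩ := Cardinal.nonempty_equiv_prod_nat (Module.Basis.ofVectorSpaceIndex ℝ E)
  let B' := B.reindex e
  obtain ⟨p₀⟩ : Nonempty (Module.Basis.ofVectorSpaceIndex ℝ E × ℕ) := inferInstance
  let Φ := Module.Dual.consProd (B'.coord p₀) m ∘ₗ B'.unboundedDual
  have hΦ {f} (hf : Continuous (Φ f)) : f = 0 :=
    B'.eq_zero_of_continuous_unboundedDual
      (Module.Dual.continuous_of_continuous_consProd (by simp : B'.coord p₀ (B' p₀) = 1) hf)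
  have hΦinj : Function.Injective Φ := by
    rw [← LinearMap.ker_eq_bot, Submodule.eq_bot_iff]
    intro f hf
    exact hΦ ((LinearMap.mem_ker.1 hf).symm ▸ continuous_const)
  refine ⟨LinearMap.range Φ, ?_, ?_⟩
  · rw [Submodule.disjoint_def]
    rintro _ ⟨f, rfl⟩ hf
    rw [hΦ hf, map_zero]
  · rw [rank_range_of_injective Φ hΦinj, rank_fun_real_of_infinite, B.mk_eq_rank'']

theorem statement10_general (E : Type u) [NormedAddCommGroup E] [NormedSpace ℝ E]
    (hE : ¬FiniteDimensional ℝ E) (m n : ℕ) (hm : 0 < m)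
    (T : Fin n → MultilinearMap ℝ (fun _ : Fin m => E) ℝ)
    (hTnc : ∀ R ∈ Submodule.span ℝ (Set.range T), R ≠ 0 → ¬Continuous ⇑R) :
    ∃ S : Submodule ℝ (MultilinearMap ℝ (fun _ : Fin m => E) ℝ),
      Submodule.span ℝ (Set.range T) ≤ S ∧
      Module.rank ℝ ↥S = 2 ^ Module.rank ℝ E ∧
      ∀ R ∈ S, R ≠ 0 → ¬Continuous ⇑R := by
  obtain ⟨m, rfl⟩ := Nat.exists_eq_add_one_of_ne_zero hm.ne'
  obtain ⟨N, hND, hNrank⟩ := exists_disjoint_continuousSubmodule_rank_eq E hE m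
  have hTD :
      Disjoint (Submodule.span ℝ (Set.range T)) (MultilinearMap.continuousSubmodule ℝ E ℝ) :=
    Submodule.disjoint_def.2 fun R hR hRc => by_contra fun hR0 => hTnc R hR hR0 hRc
  have hNinf : ℵ₀ ≤ Module.rank ℝ N :=
    hNrank ▸ (not_lt.1 (mt Module.rank_lt_aleph0_iff.1 hE)).trans (cantor _).le
  have := FiniteDimensional.span_of_finite ℝ (Set.finite_range T)
  obtain ⟨S, hTS, hSD, hSrank⟩ := Submodule.exists_le_disjoint_rank_eq hTD hND hNinf
  exact ⟨S, hTS, hSrank.trans hNrank,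
    fun R hR hR0 hRc => hR0 (Submodule.disjoint_def.1 hSD R hR hRc)⟩

/-- Let `E` be an infinite-dimensional real normed space and `m`, `n` positive
integers. Then `NL(^m E; ℝ)` is `(n, 2 ^ dim E)`-lineable in `L(^m E; ℝ)`: whenever
`T₁, …, Tₙ ∈ NL(^m E; ℝ)` are linearly independent with `span(T₁, …, Tₙ) ⊆ NL(^m E; ℝ) ∪ {0}`,
there exists a subspace `S` of `L(^m E; ℝ)` with `span(T₁, …, Tₙ) ⊆ S ⊆ NL(^m E; ℝ) ∪ {0}`
and `dim S = 2 ^ dim E`. -/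
theorem statement10 (E : Type u) [NormedAddCommGroup E] [NormedSpace ℝ E]
    (hE : ¬FiniteDimensional ℝ E) (m n : ℕ) (hm : 0 < m) (hn : 0 < n)
    (T : Fin n → MultilinearMap ℝ (fun _ : Fin m => E) ℝ)
    (hTind : LinearIndependent ℝ T)
    (hTnc : ∀ R ∈ Submodule.span ℝ (Set.range T), R ≠ 0 → ¬Continuous ⇑R) :
    ∃ S : Submodule ℝ (MultilinearMap ℝ (fun _ : Fin m => E) ℝ),
      Submodule.span ℝ (Set.range T) ≤ S ∧
      Module.rank ℝ ↥S = 2 ^ Module.rank ℝ E ∧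
      ∀ R ∈ S, R ≠ 0 → ¬Continuous ⇑R :=
  statement10_general E hE m n hm T hTnc
end

section
/- Let E and F be normed spaces over ℝ with dim E > 𝔠 and dim F > 𝔠, and let τ_0 be an infinite cardinal with τ_0 < dim F. Define NL_{τ_0}(E; F) := { T ∈ NL(E; F) : dim(T(E)) ≤ τ_0 }. Then NL_{τ_0}(E; F) is (τ, 2^{dim E})-lineable in L(E; F) for every cardinal τ < min{dim E, dim F}. -/
universe w u v

/-- A subset `A` of a real vector space `V` is `β`-lineable if `A ∪ {0}` contains a linear
subspace of `V` of Hamel dimension `β`. -/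
def Lineable {V : Type w} [AddCommGroup V] [Module ℝ V] (A : Set V) (β : Cardinal.{w}) : Prop :=
  ∃ S : Submodule ℝ V, Module.rank ℝ ↥S = β ∧ (S : Set V) ⊆ A ∪ {0}

/-- A subset `A` of a real vector space `V` is `(α, β)`-lineable if `A` is `α`-lineable and
every subspace `W ⊆ A ∪ {0}` with `dim W = α` is contained in a subspace `S` with `dim S = β`
and `W ⊆ S ⊆ A ∪ {0}`. -/
def ABLineable {V : Type w} [AddCommGroup V] [Module ℝ V] (A : Set V)
    (α β : Cardinal.{w}) : Prop :=
  Lineable A α ∧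
  ∀ W : Submodule ℝ V, Module.rank ℝ ↥W = α → (W : Set V) ⊆ A ∪ {0} →
    ∃ S : Submodule ℝ V, W ≤ S ∧ Module.rank ℝ ↥S = β ∧ (S : Set V) ⊆ A ∪ {0}

/-!
Split a Hamel basis of `E` into `dim E` countable blocks indexed by `ι`; for `u : ι → ℝ` let
`Φ u` be the functional that takes the value `(n + 1) ‖b‖ u i` on the `n`-th vector `b` of block
`i`. This is an injective linear map from `ℝ^ι`, of dimension `2 ^ dim E`, to the algebraic dual
of `E`, and `Φ u` is discontinuous for every `u ≠ 0`; composing with `t ↦ t • y` for a fixed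
`y ≠ 0` turns these into discontinuous rank-one operators `Ψ u`.
Given `W ⊆ NL_{τ₀}(E; F) ∪ {0}` with `dim W < 2 ^ dim E`, the `u` with `Ψ u ∈ (continuous) + W`
form a subspace that embeds into `W` modulo the continuous operators, so a complement of it still
has dimension `2 ^ dim E`. For `u ≠ 0` in that complement and `w ∈ W`, `w + Ψ u` is discontinuous
and has range of dimension at most `τ₀ + 1 = τ₀`.
-/

open Cardinal

section LinearAlgebra

variable {K : Type*} [DivisionRing K]

theorem Submodule.exists_isCompl_rank_eq {V : Type*} [AddCommGroup V] [Module K V]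
    (hV : ℵ₀ ≤ Module.rank K V) (B : Submodule K V) (hB : Module.rank K B < Module.rank K V) :
    ∃ U : Submodule K V, IsCompl B U ∧ Module.rank K U = Module.rank K V := by
  obtain ⟨U, hBU⟩ := B.exists_isCompl
  have hsum := Submodule.rank_sup_add_rank_inf_eq B U
  rw [hBU.sup_eq_top, hBU.inf_eq_bot, rank_top, rank_bot, add_zero] at hsum
  refine ⟨U, hBU, (Submodule.rank_le U).antisymm (not_lt.mp fun hU => ?_)⟩
  exact (add_lt_of_lt hV hB hU).ne hsum.symm

variable {V : Type u} {X : Type v} [AddCommGroup V] [Module K V] [AddCommGroup X] [Module K X]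

theorem LinearMap.lift_rank_comap_sup_le (f : V →ₗ[K] X) {C : Submodule K X}
    (hf : ∀ v, f v ∈ C → v = 0) (W : Submodule K X) :
    lift.{v} (Module.rank K (Submodule.comap f (C ⊔ W))) ≤ lift.{u} (Module.rank K W) := by
  have hg : Function.Injective (C.mkQ ∘ₗ f) := by
    rw [← LinearMap.ker_eq_bot, eq_bot_iff]
    intro v hv
    exact hf v ((Submodule.Quotient.mk_eq_zero C).mp hv)
  have hmap : (Submodule.comap f (C ⊔ W)).map (C.mkQ ∘ₗ f) ≤ W.map C.mkQ := by
    rintro _ ⟨v, hv, rfl⟩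
    obtain ⟨c, hc, w, hw, hcw⟩ := Submodule.mem_sup.mp hv
    refine ⟨w, hw, ?_⟩
    simp [← hcw, (Submodule.Quotient.mk_eq_zero C).mpr hc]
  rw [(Submodule.equivMapOfInjective _ hg _).lift_rank_eq, lift_le]
  exact (Submodule.rank_mono hmap).trans (rank_map_le _ _)

theorem LinearMap.exists_le_range_forall_add_mem_eq_zero (f : V →ₗ[K] X) {C : Submodule K X}
    (hf : ∀ v, f v ∈ C → v = 0) (hV : ℵ₀ ≤ Module.rank K V) (W : Submodule K X)
    (hW : lift.{u} (Module.rank K W) < lift.{v} (Module.rank K V)) :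
    ∃ U ≤ LinearMap.range f, lift.{u} (Module.rank K U) = lift.{v} (Module.rank K V) ∧
      ∀ u ∈ U, ∀ w ∈ W, w + u ∈ C → u = 0 := by
  have hinj : Function.Injective f := by
    rw [← LinearMap.ker_eq_bot, eq_bot_iff]
    exact fun v hv => hf v ((LinearMap.mem_ker.mp hv).symm ▸ C.zero_mem)
  set B := Submodule.comap f (C ⊔ W)
  have hB : Module.rank K B < Module.rank K V := by
    rw [← lift_lt.{u, v}]
    exact (f.lift_rank_comap_sup_le hf W).trans_lt hW
  obtain ⟨U, hBU, hU⟩ := B.exists_isCompl_rank_eq hV hB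
  refine ⟨U.map f, LinearMap.map_le_range, ?_, ?_⟩
  · rw [← (Submodule.equivMapOfInjective f hinj U).lift_rank_eq, hU]
  · rintro _ ⟨v, hv, rfl⟩ w hw hC
    have hvB : v ∈ B := by
      have := Submodule.sub_mem _ (Submodule.mem_sup_left hC) (Submodule.mem_sup_right hw)
      simpa [B] using this
    simp [show v = 0 from hBU.disjoint.le_bot ⟨hvB, hv⟩]

end LinearAlgebra

namespace LinearMap

variable (R E F : Type*) [CommSemiring R] [AddCommMonoid E] [Module R E]
  [TopologicalSpace E] [AddCommMonoid F] [Module R F] [TopologicalSpace F] [ContinuousAdd F]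
  [ContinuousConstSMul R F]

def continuousSubmodule : Submodule R (E →ₗ[R] F) where
  carrier := {T | Continuous T}
  add_mem' := Continuous.add
  zero_mem' := continuous_zero
  smul_mem' c _ h := h.const_smul c

end LinearMap

theorem rank_fun_real (ι : Type u) [Infinite ι] : Module.rank ℝ (ι → ℝ) = 2 ^ #ι := by
  rw [rank_fun_infinite, mk_arrow, mk_real, lift_continuum, lift_id', ← two_power_aleph0,
    ← power_mul, mul_eq_right (aleph0_le_mk ι) (aleph0_le_mk ι) aleph0_ne_zero]

section NormedSpace

variable {E : Type u} [NormedAddCommGroup E] [NormedSpace ℝ E]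

theorem exists_linearMap_forall_ne_zero_not_continuous (hE : ℵ₀ ≤ Module.rank ℝ E) :
    ∃ (ι : Type u) (Φ : (ι → ℝ) →ₗ[ℝ] E →ₗ[ℝ] ℝ), #ι = Module.rank ℝ E ∧
      ∀ u ≠ 0, ¬Continuous (Φ u) := by
  let ι := Module.Basis.ofVectorSpaceIndex ℝ E
  have hι : #ι = Module.rank ℝ E := (Module.Basis.ofVectorSpace ℝ E).mk_eq_rank''
  have : Infinite ι := infinite_iff.mpr (hι ▸ hE)
  obtain ⟨e⟩ : Nonempty (ι × ℕ ≃ ι) := by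
    rw [← Cardinal.eq, mk_prod, mk_nat, lift_aleph0, lift_uzero]
    exact mul_eq_left (aleph0_le_mk ι) (aleph0_le_mk ι) aleph0_ne_zero
  let b := (Module.Basis.ofVectorSpace ℝ E).reindex e.symm
  -- `Φ u` is unbounded on the normalised `b (i, n)`, `n : ℕ`, as soon as `u i ≠ 0`
  let weight : ι × ℕ → ℝ := fun p => (p.2 + 1) * ‖b p‖
  refine ⟨ι, (b.constr ℝ).toLinearMap ∘ₗ LinearMap.pi fun p => weight p • LinearMap.proj p.1,
    hι, ?_⟩
  intro u hu hcont
  obtain ⟨C, -, hC⟩ := SemilinearMapClass.bound_of_continuous _ hcont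
  obtain ⟨i, hi⟩ := Function.ne_iff.mp hu
  have hi : 0 < |u i| := abs_pos.mpr hi
  obtain ⟨n, hn⟩ := exists_nat_gt (C / |u i|)
  have hb : 0 < ‖b (i, n)‖ := norm_pos_iff.mpr (b.ne_zero _)
  have hbound : (n + 1) * |u i| * ‖b (i, n)‖ ≤ C * ‖b (i, n)‖ := by
    simpa [weight, Module.Basis.constr_basis, abs_of_pos (n.cast_add_one_pos (α := ℝ)),
      mul_right_comm] using hC (b (i, n))
  rw [div_lt_iff₀ hi] at hn
  nlinarith [le_of_mul_le_mul_right hbound hb]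

variable {F : Type v} [NormedAddCommGroup F] [NormedSpace ℝ F]

theorem exists_le_rank_eq_subset_not_continuous [Nontrivial F] (hE : ℵ₀ ≤ Module.rank ℝ E)
    {τ₀ : Cardinal.{v}} (hτ₀ : ℵ₀ ≤ τ₀) (W : Submodule ℝ (E →ₗ[ℝ] F))
    (hW : Module.rank ℝ W < lift.{v} (2 ^ Module.rank ℝ E))
    (hWA : (W : Set (E →ₗ[ℝ] F)) ⊆
      {T | ¬Continuous T ∧ Module.rank ℝ (LinearMap.range T) ≤ τ₀} ∪ {0}) :
    ∃ S : Submodule ℝ (E →ₗ[ℝ] F), W ≤ S ∧ Module.rank ℝ S = lift.{v} (2 ^ Module.rank ℝ E) ∧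
      (S : Set (E →ₗ[ℝ] F)) ⊆
        {T | ¬Continuous T ∧ Module.rank ℝ (LinearMap.range T) ≤ τ₀} ∪ {0} := by
  obtain ⟨y, hy⟩ := exists_ne (0 : F)
  obtain ⟨ι, Φ, hι, hΦ⟩ := exists_linearMap_forall_ne_zero_not_continuous hE
  have : Infinite ι := infinite_iff.mpr (hι ▸ hE)
  have hrank : Module.rank ℝ (ι → ℝ) = 2 ^ Module.rank ℝ E := by rw [rank_fun_real, hι]
  let Ψ := LinearMap.compRight ℝ (LinearMap.toSpanSingleton ℝ F y) ∘ₗ Φ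
  have hΨ : ∀ u, Ψ u ∈ LinearMap.continuousSubmodule ℝ E F → u = 0 := by
    intro u hu
    by_contra h
    exact hΦ u h ((isClosedEmbedding_smul_left hy).continuous_iff.mpr hu)
  obtain ⟨U, hUΨ, hU, hUW⟩ := Ψ.exists_le_range_forall_add_mem_eq_zero hΨ
    (hrank ▸ hE.trans (cantor _).le) W (by rwa [lift_id', hrank, lift_umax])
  have hUrank : Module.rank ℝ U = lift.{v} (2 ^ Module.rank ℝ E) := by
    rwa [lift_id', hrank, lift_umax] at hU
  have h2E : ℵ₀ ≤ lift.{v} (2 ^ Module.rank ℝ E) := by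
    rw [← lift_aleph0.{v}, lift_le]
    exact hE.trans (cantor _).le
  refine ⟨W ⊔ U, le_sup_left, ?_, ?_⟩
  · refine le_antisymm ?_ (hUrank ▸ Submodule.rank_mono le_sup_right)
    calc Module.rank ℝ ↥(W ⊔ U) ≤ Module.rank ℝ W + Module.rank ℝ U :=
          Submodule.rank_add_le_rank_add_rank W U
      _ = lift.{v} (2 ^ Module.rank ℝ E) := by rw [hUrank, add_eq_right h2E hW.le]
  rintro _ hx
  obtain ⟨w, hw, u, hu, rfl⟩ := Submodule.mem_sup.mp hx
  rcases eq_or_ne u 0 with rfl | hu0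
  · simpa using hWA hw
  refine .inl ⟨fun hc => hu0 (hUW u hu w hw hc), ?_⟩
  have hwrank : w.rank ≤ τ₀ := by
    rcases hWA hw with hwA | rfl
    exacts [hwA.2, by simp]
  obtain ⟨f, rfl⟩ := hUΨ hu
  have hΨrank : (Ψ f).rank ≤ 1 := by
    refine (LinearMap.rank_comp_le_left _ _).trans ?_
    rw [LinearMap.rank, LinearMap.range_toSpanSingleton]
    simpa using rank_span_le {y}
  calc (w + Ψ f).rank ≤ w.rank + (Ψ f).rank := LinearMap.rank_add_le _ _
    _ ≤ τ₀ + τ₀ := add_le_add hwrank (hΨrank.trans (one_le_aleph0.trans hτ₀))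
    _ = τ₀ := add_eq_self hτ₀

end NormedSpace

theorem Lineable.of_le_rank {V : Type w} [AddCommGroup V] [Module ℝ V] {A : Set V}
    {κ : Cardinal.{w}} (S : Submodule ℝ V) (hS : (S : Set V) ⊆ A ∪ {0})
    (hκ : κ ≤ Module.rank ℝ S) : Lineable A κ := by
  obtain ⟨s, hs, hli⟩ := le_rank_iff_exists_linearIndependent.mp hκ
  refine ⟨(Submodule.span ℝ s).map S.subtype, ?_, subset_trans (Submodule.map_subtype_le _ _) hS⟩
  rw [rank_map_eq S.injective_subtype, rank_span_set hli, hs]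

theorem statement12_general (E : Type u) (F : Type v) [NormedAddCommGroup E] [NormedSpace ℝ E]
    [NormedAddCommGroup F] [NormedSpace ℝ F]
    (hE : Cardinal.continuum < Module.rank ℝ E)
    (τ₀ : Cardinal.{v}) (hτ₀ : Cardinal.aleph0 ≤ τ₀)
    (τ : Cardinal.{max u v})
    (hτ : τ < min (Cardinal.lift.{v} (Module.rank ℝ E)) (Cardinal.lift.{u} (Module.rank ℝ F))) :
    ABLineable
      {T : E →ₗ[ℝ] F | ¬Continuous ⇑T ∧ Module.rank ℝ ↥(LinearMap.range T) ≤ τ₀}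
      τ (Cardinal.lift.{v} (2 ^ Module.rank ℝ E)) := by
  have hE : ℵ₀ ≤ Module.rank ℝ E := aleph0_le_continuum.trans hE.le
  have : Nontrivial F := by
    rw [← rank_pos_iff_nontrivial (R := ℝ), ← lift_lt.{v, u}, lift_zero]
    exact zero_le.trans_lt (hτ.trans_le (min_le_right _ _))
  have hτ : τ < lift.{v} (2 ^ Module.rank ℝ E) :=
    (hτ.trans_le (min_le_left _ _)).trans_le (lift_le.mpr (cantor _).le)
  refine ⟨?_, fun W hW hWA => exists_le_rank_eq_subset_not_continuous hE hτ₀ W (hW ▸ hτ) hWA⟩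
  obtain ⟨S, -, hS, hSA⟩ := exists_le_rank_eq_subset_not_continuous (F := F) hE hτ₀ ⊥
    (by simpa using zero_le.trans_lt hτ) (by simp)
  exact Lineable.of_le_rank S hSA (hS ▸ hτ.le)

/-- Let `E`, `F` be real normed spaces with `dim E > 𝔠` and `dim F > 𝔠`, and let
`τ₀` be an infinite cardinal with `τ₀ < dim F`. The set
`NL_{τ₀}(E; F) = {T ∈ NL(E; F) : dim T(E) ≤ τ₀}` of non-continuous linear operators whose range
has dimension at most `τ₀` is `(τ, 2 ^ dim E)`-lineable in `L(E; F)` for every cardinal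
`τ < min {dim E, dim F}` (with universe lifts to compare cardinals). -/
theorem statement12 (E : Type u) (F : Type v) [NormedAddCommGroup E] [NormedSpace ℝ E]
    [NormedAddCommGroup F] [NormedSpace ℝ F]
    (hE : Cardinal.continuum < Module.rank ℝ E)
    (hF : Cardinal.continuum < Module.rank ℝ F)
    (τ₀ : Cardinal.{v}) (hτ₀ : Cardinal.aleph0 ≤ τ₀) (hτ₀F : τ₀ < Module.rank ℝ F)
    (τ : Cardinal.{max u v})
    (hτ : τ < min (Cardinal.lift.{v} (Module.rank ℝ E)) (Cardinal.lift.{u} (Module.rank ℝ F))) :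
    ABLineable
      {T : E →ₗ[ℝ] F | ¬Continuous ⇑T ∧ Module.rank ℝ ↥(LinearMap.range T) ≤ τ₀}
      τ (Cardinal.lift.{v} (2 ^ Module.rank ℝ E)) :=
  statement12_general E F hE τ₀ hτ₀ τ hτ
end
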